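/- Let c ∈ (0, 1/3) and define the bilinear function J : [0,1]² × [0,1]² → ℝ by J((α₁, α₂), (β₁, β₂)) = (c/2)(1 − α₁ + α₂) + (1/2)(2 − α₁ − α₂) + (1/2)(2α₁ + α₂ − 1)β₁ + (1/2)(α₁ + 2α₂ − 1)β₂. Then (α*, β*) with α* = (1/3, 1/3) and β* = (1/3 + c, 1/3 − c) is a saddle point: J(α, β*) ≤ J(α*, β*) ≤ J(α*, β) for all α, β ∈ [0,1]², with value J(α*, β*) = c/2 + 2/3. Moreover it is the unique saddle point of J on [0,1]² × [0,1]². -/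
import Mathlib


open Set

/-- Alice's expected payoff in the two-stage zero-sum signaling game. -/
noncomputable def Jg (c α₁ α₂ β₁ β₂ : ℝ) : ℝ :=
  c / 2 * (1 - α₁ + α₂) + 1 / 2 * (2 - α₁ - α₂) +
    1 / 2 * (2 * α₁ + α₂ - 1) * β₁ + 1 / 2 * (α₁ + 2 * α₂ - 1) * β₂

/-- `((α₁,α₂),(β₁,β₂))` is a saddle point of `Jg c` on `[0,1]² × [0,1]²`. -/
def IsSaddle (c α₁ α₂ β₁ β₂ : ℝ) : Prop :=
  α₁ ∈ Icc (0:ℝ) 1 ∧ α₂ ∈ Icc (0:ℝ) 1 ∧ β₁ ∈ Icc (0:ℝ) 1 ∧ β₂ ∈ Icc (0:ℝ) 1 ∧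
  (∀ a₁ a₂ : ℝ, a₁ ∈ Icc (0:ℝ) 1 → a₂ ∈ Icc (0:ℝ) 1 →
    Jg c a₁ a₂ β₁ β₂ ≤ Jg c α₁ α₂ β₁ β₂) ∧
  (∀ b₁ b₂ : ℝ, b₁ ∈ Icc (0:ℝ) 1 → b₂ ∈ Icc (0:ℝ) 1 →
    Jg c α₁ α₂ β₁ β₂ ≤ Jg c α₁ α₂ b₁ b₂)

lemma Jg_bstar (c a₁ a₂ : ℝ) : Jg c a₁ a₂ (1/3 + c) (1/3 - c) = c / 2 + 2 / 3 := by
  unfold Jg; ring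

lemma Jg_astar (c b₁ b₂ : ℝ) : Jg c (1/3) (1/3) b₁ b₂ = c / 2 + 2 / 3 := by
  unfold Jg; ring

set_option maxHeartbeats 1600000 in
theorem stmt12 (c : ℝ) (hc : c ∈ Ioo (0:ℝ) (1/3)) :
    IsSaddle c (1/3) (1/3) (1/3 + c) (1/3 - c) ∧
    Jg c (1/3) (1/3) (1/3 + c) (1/3 - c) = c / 2 + 2 / 3 ∧
    (∀ α₁ α₂ β₁ β₂ : ℝ, IsSaddle c α₁ α₂ β₁ β₂ →
      α₁ = 1/3 ∧ α₂ = 1/3 ∧ β₁ = 1/3 + c ∧ β₂ = 1/3 - c) := by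
  obtain ⟨hc0, hc3⟩ := hc
  refine ⟨⟨⟨by norm_num, by norm_num⟩, ⟨by norm_num, by norm_num⟩,
    ⟨by linarith, by linarith⟩, ⟨by linarith, by linarith⟩, ?_, ?_⟩, Jg_astar c _ _, ?_⟩
  · intro a₁ a₂ _ _
    rw [Jg_bstar, Jg_bstar]
  · intro b₁ b₂ _ _
    rw [Jg_astar, Jg_astar]
  · intro α₁ α₂ β₁ β₂ ⟨ha1, ha2, hb1, hb2, hA, hB⟩
    -- the value at (α, β) equals v = c/2 + 2/3
    have hv2 : c / 2 + 2 / 3 ≤ Jg c α₁ α₂ β₁ β₂ := by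
      have := hA (1/3) (1/3) ⟨by norm_num, by norm_num⟩ ⟨by norm_num, by norm_num⟩
      rwa [Jg_astar] at this
    -- Bob-side deviations at b₂ = 1/3 - c, b₁ ∈ {0,1} give 2α₁+α₂=1
    have e1 : c / 2 + 2 / 3 ≤ Jg c α₁ α₂ 0 (1/3 - c) :=
      le_trans hv2 (hB 0 (1/3 - c) ⟨le_refl 0, by norm_num⟩ ⟨by linarith, by linarith⟩)
    have e2 : c / 2 + 2 / 3 ≤ Jg c α₁ α₂ 1 (1/3 - c) :=
      le_trans hv2 (hB 1 (1/3 - c) ⟨by norm_num, le_refl 1⟩ ⟨by linarith, by linarith⟩)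
    have e3 : c / 2 + 2 / 3 ≤ Jg c α₁ α₂ (1/3 + c) 0 :=
      le_trans hv2 (hB (1/3 + c) 0 ⟨by linarith, by linarith⟩ ⟨le_refl 0, by norm_num⟩)
    have e4 : c / 2 + 2 / 3 ≤ Jg c α₁ α₂ (1/3 + c) 1 :=
      le_trans hv2 (hB (1/3 + c) 1 ⟨by linarith, by linarith⟩ ⟨by norm_num, le_refl 1⟩)
    simp only [Jg] at e1 e2 e3 e4
    have hk1 : 2 * α₁ + α₂ - 1 ≤ 0 := by nlinarith [e1, hc0]
    have hk1' : 0 ≤ 2 * α₁ + α₂ - 1 := by nlinarith [e2, hc3]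
    have hk2 : α₁ + 2 * α₂ - 1 ≤ 0 := by nlinarith [e3, hc3]
    have hk2' : 0 ≤ α₁ + 2 * α₂ - 1 := by nlinarith [e4, hc0]
    have hA1 : α₁ = 1/3 := by linarith
    have hA2 : α₂ = 1/3 := by linarith
    subst hA1 hA2
    -- Alice-side deviations now give the β equations
    have f1 := hA 0 (1/3) ⟨le_refl 0, by norm_num⟩ ⟨by norm_num, by norm_num⟩
    have f2 := hA 1 (1/3) ⟨by norm_num, le_refl 1⟩ ⟨by norm_num, by norm_num⟩
    have f3 := hA (1/3) 0 ⟨by norm_num, by norm_num⟩ ⟨le_refl 0, by norm_num⟩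
    have f4 := hA (1/3) 1 ⟨by norm_num, by norm_num⟩ ⟨by norm_num, le_refl 1⟩
    rw [Jg_astar] at f1 f2 f3 f4
    simp only [Jg] at f1 f2 f3 f4
    refine ⟨rfl, rfl, by linarith, by linarith⟩
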